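/- Let p, N be positive integers, let A be a real p×N matrix with A Aᵀ invertible, set V = (A Aᵀ)⁻¹, let σ > 0 and g ∈ ℝᵖ. Let T : ℝᴺ → ℝ be square-integrable with respect to N(Aᵀγ, σ²I_N) for every γ ∈ ℝᵖ and unbiased for gᵀγ, i.e., E_{y ∼ N(Aᵀγ, σ²I_N)}[T(y)] = gᵀγ for all γ ∈ ℝᵖ. Let u : ℝᴺ → ℝ be non-negative. Then for every γ ∈ ℝᵖ and every y' ∈ ℝᴺ satisfying u(y')² < σ² gᵀ V g, one has u(y')² < Var_{y ∼ N(Aᵀγ, σ²I_N)}(T(y)). -/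

import Mathlib

/-!
Hammersley–Chapman–Robbins bound. Moving the parameter from `γ` to `γ + δ` reweights
`N(Aᵀγ, σ²I)` by a likelihood ratio `L` with mean `1` and variance `exp (‖Aᵀδ‖² / σ²) - 1`,
and unbiasedness gives `cov(T, L) = gᵀδ`. Cauchy–Schwarz for the covariance yields
`(gᵀδ)² ≤ Var T · (exp (‖Aᵀδ‖² / σ²) - 1)`; for `δ = t V g` this reads
`σ² q s ≤ Var T · (eˢ - 1)` with `q = gᵀVg` and `s = t² q / σ²`, and letting `s → 0` gives the
Cramér–Rao bound `σ² gᵀVg ≤ Var T`.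
-/

open MeasureTheory Matrix Real

/-- The multivariate Gaussian measure `N(μ, σ² I_N)` on `ℝᴺ`. -/
noncomputable def gaussianPi (N : ℕ) (μ : Fin N → ℝ) (σ : ℝ) : Measure (Fin N → ℝ) :=
  volume.withDensity (fun y => ENNReal.ofReal
    ((2 * Real.pi * σ ^ 2) ^ (-(N : ℝ) / 2) *
      Real.exp (- (∑ i, (y i - μ i) ^ 2) / (2 * σ ^ 2))))

open ProbabilityTheory Filter Topology

lemma covariance_sq_le_variance_mul_variance {Ω : Type*} {mΩ : MeasurableSpace Ω}
    {P : Measure Ω} [IsFiniteMeasure P] {X Y : Ω → ℝ} (hX : MemLp X 2 P) (hY : MemLp Y 2 P) :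
    cov[X, Y; P] ^ 2 ≤ Var[X; P] * Var[Y; P] := by
  have hquad : ∀ c : ℝ, 0 ≤ Var[Y; P] * (c * c) + (-2 * cov[X, Y; P]) * c + Var[X; P] := by
    intro c
    have h := variance_nonneg (X - c • Y) P
    rw [variance_sub hX (hY.const_smul c), variance_smul, covariance_smul_right] at h
    linarith
  have h := discrim_le_zero hquad
  rw [discrim] at h
  linarith

lemma le_of_forall_pos_mul_le_mul_exp_sub_one {c W : ℝ} (hW : 0 ≤ W)
    (h : ∀ s, 0 < s → c * s ≤ W * (exp s - 1)) : c ≤ W := by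
  have hlim : Tendsto (fun s => c * (1 - s)) (𝓝[>] 0) (𝓝 c) := by
    have : Tendsto (fun s : ℝ => c * (1 - s)) (𝓝 0) (𝓝 (c * (1 - 0))) :=
      ((continuous_const.sub continuous_id).const_mul c).tendsto 0
    simpa using this.mono_left nhdsWithin_le_nhds
  refine le_of_tendsto hlim ?_
  filter_upwards [Ioo_mem_nhdsGT one_pos] with s ⟨hs0, hs1⟩
  have hexp : exp s - 1 ≤ s / (1 - s) := by
    have h1 := exp_bound_div_one_sub_of_interval' hs0 hs1
    have h2 : 1 / (1 - s) - 1 = s / (1 - s) := by field_simp; ring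
    linarith
  have hcs := (h s hs0).trans (mul_le_mul_of_nonneg_left hexp hW)
  rw [← mul_div_assoc, le_div_iff₀ (by linarith)] at hcs
  nlinarith

section GaussianPi

variable {N : ℕ}

lemma gaussianPi_eq_withDensity_prod (μ : Fin N → ℝ) (σ : ℝ) :
    gaussianPi N μ σ = volume.withDensity fun y =>
      ENNReal.ofReal (∏ i, gaussianPDFReal (μ i) (σ ^ 2).toNNReal (y i)) := by
  have hC : 0 ≤ 2 * π * σ ^ 2 := by positivity
  unfold gaussianPi
  congr with y
  simp only [gaussianPDFReal, Real.coe_toNNReal _ (sq_nonneg σ), Finset.prod_mul_distrib,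
    Finset.prod_const, Finset.card_univ, Fintype.card_fin, ← exp_sum, ← Finset.sum_div,
    Finset.sum_neg_distrib]
  rw [sqrt_eq_rpow, ← rpow_neg hC, ← rpow_mul_natCast hC]
  ring_nf

lemma isProbabilityMeasure_gaussianPi (μ : Fin N → ℝ) {σ : ℝ} (hσ : σ ≠ 0) :
    IsProbabilityMeasure (gaussianPi N μ σ) := by
  have hv : (σ ^ 2).toNNReal ≠ 0 := by positivity
  constructor
  rw [gaussianPi_eq_withDensity_prod, withDensity_apply _ MeasurableSet.univ,
    Measure.restrict_univ, volume_pi, ← ofReal_integral_eq_lintegral_ofReal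
      (Integrable.fintype_prod fun i => integrable_gaussianPDFReal (μ i) _)
      (ae_of_all _ fun y => Finset.prod_nonneg fun i _ => gaussianPDFReal_nonneg _ _ _),
    integral_fintype_prod_eq_prod]
  simp [integral_gaussianPDFReal_eq_one _ hv]

noncomputable def gaussianPiLikelihoodRatio (μ d : Fin N → ℝ) (σ : ℝ) (y : Fin N → ℝ) : ℝ :=
  exp (((y - μ) ⬝ᵥ d - d ⬝ᵥ d / 2) / σ ^ 2)

lemma measurable_gaussianPiLikelihoodRatio (μ d : Fin N → ℝ) (σ : ℝ) :
    Measurable (gaussianPiLikelihoodRatio μ d σ) := by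
  unfold gaussianPiLikelihoodRatio dotProduct
  fun_prop

lemma gaussianPi_add_eq_withDensity (μ d : Fin N → ℝ) (σ : ℝ) :
    gaussianPi N (μ + d) σ = (gaussianPi N μ σ).withDensity fun y =>
      ENNReal.ofReal (gaussianPiLikelihoodRatio μ d σ y) := by
  unfold gaussianPi
  rw [← withDensity_mul _ (by fun_prop)
    (measurable_gaussianPiLikelihoodRatio μ d σ).ennreal_ofReal]
  congr with y
  rw [Pi.mul_apply, ← ENNReal.ofReal_mul (by positivity)]
  congr 1
  have hsum : ∑ i, (y i - (μ + d) i) ^ 2 =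
      ∑ i, (y i - μ i) ^ 2 - 2 * ((y - μ) ⬝ᵥ d) + d ⬝ᵥ d := by
    simp only [dotProduct, Pi.sub_apply, Pi.add_apply, Finset.mul_sum, ← Finset.sum_sub_distrib,
      ← Finset.sum_add_distrib]
    exact Finset.sum_congr rfl fun i _ => by ring
  rw [gaussianPiLikelihoodRatio, hsum, mul_assoc _ (exp _), ← exp_add]
  ring_nf

variable {σ : ℝ} (μ d : Fin N → ℝ)

lemma integral_gaussianPi_add (f : (Fin N → ℝ) → ℝ) :
    ∫ y, f y ∂gaussianPi N (μ + d) σ =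
      ∫ y, gaussianPiLikelihoodRatio μ d σ y * f y ∂gaussianPi N μ σ := by
  rw [gaussianPi_add_eq_withDensity, integral_withDensity_eq_integral_toReal_smul
    (measurable_gaussianPiLikelihoodRatio μ d σ).ennreal_ofReal
    (ae_of_all _ fun _ => ENNReal.ofReal_lt_top)]
  simp only [ENNReal.toReal_ofReal (exp_pos _).le, smul_eq_mul, gaussianPiLikelihoodRatio]

lemma integral_gaussianPiLikelihoodRatio (hσ : σ ≠ 0) :
    ∫ y, gaussianPiLikelihoodRatio μ d σ y ∂gaussianPi N μ σ = 1 := by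
  have := isProbabilityMeasure_gaussianPi (μ + d) hσ
  simpa using (integral_gaussianPi_add (σ := σ) μ d fun _ => 1).symm

lemma sq_gaussianPiLikelihoodRatio (y : Fin N → ℝ) :
    gaussianPiLikelihoodRatio μ d σ y ^ 2 =
      exp (d ⬝ᵥ d / σ ^ 2) * gaussianPiLikelihoodRatio μ (2 • d) σ y := by
  simp only [gaussianPiLikelihoodRatio, sq, ← exp_add, dotProduct_smul, smul_dotProduct]
  ring_nf

lemma memLp_two_gaussianPiLikelihoodRatio (hσ : σ ≠ 0) :
    MemLp (gaussianPiLikelihoodRatio μ d σ) 2 (gaussianPi N μ σ) := by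
  refine (memLp_two_iff_integrable_sq
    (measurable_gaussianPiLikelihoodRatio μ d σ).aestronglyMeasurable).2 ?_
  simp_rw [sq_gaussianPiLikelihoodRatio]
  refine (Integrable.of_integral_ne_zero ?_).const_mul _
  rw [integral_gaussianPiLikelihoodRatio _ _ hσ]
  exact one_ne_zero

lemma variance_gaussianPiLikelihoodRatio (hσ : σ ≠ 0) :
    Var[gaussianPiLikelihoodRatio μ d σ; gaussianPi N μ σ] = exp (d ⬝ᵥ d / σ ^ 2) - 1 := by
  have := isProbabilityMeasure_gaussianPi μ hσ
  rw [variance_eq_sub (memLp_two_gaussianPiLikelihoodRatio μ d hσ)]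
  simp_rw [Pi.pow_apply, sq_gaussianPiLikelihoodRatio]
  rw [integral_const_mul, integral_gaussianPiLikelihoodRatio _ _ hσ,
    integral_gaussianPiLikelihoodRatio _ _ hσ]
  ring

lemma covariance_gaussianPiLikelihoodRatio (hσ : σ ≠ 0) {T : (Fin N → ℝ) → ℝ}
    (hT : MemLp T 2 (gaussianPi N μ σ)) :
    cov[T, gaussianPiLikelihoodRatio μ d σ; gaussianPi N μ σ] =
      ∫ y, T y ∂gaussianPi N (μ + d) σ - ∫ y, T y ∂gaussianPi N μ σ := by
  have := isProbabilityMeasure_gaussianPi μ hσ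
  rw [covariance_eq_sub hT (memLp_two_gaussianPiLikelihoodRatio μ d hσ),
    integral_gaussianPiLikelihoodRatio _ _ hσ, integral_gaussianPi_add]
  simp only [Pi.mul_apply, mul_comm (T _), mul_one]

theorem sq_integral_gaussianPi_add_sub_le (hσ : σ ≠ 0) {T : (Fin N → ℝ) → ℝ}
    (hT : MemLp T 2 (gaussianPi N μ σ)) :
    (∫ y, T y ∂gaussianPi N (μ + d) σ - ∫ y, T y ∂gaussianPi N μ σ) ^ 2 ≤
      Var[T; gaussianPi N μ σ] * (exp (d ⬝ᵥ d / σ ^ 2) - 1) := by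
  have := isProbabilityMeasure_gaussianPi μ hσ
  rw [← covariance_gaussianPiLikelihoodRatio μ d hσ hT,
    ← variance_gaussianPiLikelihoodRatio μ d hσ]
  exact covariance_sq_le_variance_mul_variance hT (memLp_two_gaussianPiLikelihoodRatio μ d hσ)

end GaussianPi

theorem sq_mul_dotProduct_inv_mulVec_le_variance {p N : ℕ} {A : Matrix (Fin p) (Fin N) ℝ}
    (hA : IsUnit (A * Aᵀ).det) {σ : ℝ} (hσ : σ ≠ 0) {g : Fin p → ℝ} {T : (Fin N → ℝ) → ℝ}
    {γ : Fin p → ℝ} (hT : MemLp T 2 (gaussianPi N (Aᵀ *ᵥ γ) σ))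
    (hunbiased : ∀ γ, ∫ y, T y ∂gaussianPi N (Aᵀ *ᵥ γ) σ = g ⬝ᵥ γ) :
    σ ^ 2 * (g ⬝ᵥ (A * Aᵀ)⁻¹ *ᵥ g) ≤ Var[T; gaussianPi N (Aᵀ *ᵥ γ) σ] := by
  set w := (A * Aᵀ)⁻¹ *ᵥ g
  set q := g ⬝ᵥ w
  set W := Var[T; gaussianPi N (Aᵀ *ᵥ γ) σ]
  have hw : (A * Aᵀ) *ᵥ w = g := by rw [mulVec_mulVec, mul_nonsing_inv _ hA, one_mulVec]
  have hshift : ∀ t : ℝ, (t * q) ^ 2 ≤ W * (exp (t ^ 2 * q / σ ^ 2) - 1) := by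
    intro t
    have h := sq_integral_gaussianPi_add_sub_le _ (Aᵀ *ᵥ (t • w)) hσ hT
    have hnorm : (Aᵀ *ᵥ (t • w)) ⬝ᵥ (Aᵀ *ᵥ (t • w)) = t ^ 2 * q := by
      rw [dotProduct_transpose_mulVec, mulVec_mulVec, mulVec_smul, hw, dotProduct_smul,
        smul_dotProduct, dotProduct_comm, smul_eq_mul, smul_eq_mul]
      ring
    rwa [← mulVec_add, hunbiased, hunbiased, dotProduct_add, add_sub_cancel_left,
      dotProduct_smul, smul_eq_mul, hnorm] at h
  rcases le_or_gt q 0 with hq | hq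
  · nlinarith [sq_nonneg σ, variance_nonneg T (gaussianPi N (Aᵀ *ᵥ γ) σ)]
  refine le_of_forall_pos_mul_le_mul_exp_sub_one (variance_nonneg _ _) fun s hs => ?_
  have h := hshift √(σ ^ 2 * s / q)
  rwa [mul_pow, sq_sqrt (by positivity), show σ ^ 2 * s / q * q / σ ^ 2 = s by field_simp,
    show σ ^ 2 * s / q * q ^ 2 = σ ^ 2 * q * s by field_simp] at h

theorem stmt11_general (p N : ℕ)
    (A : Matrix (Fin p) (Fin N) ℝ) (hA : IsUnit (A * Aᵀ).det)
    (V : Matrix (Fin p) (Fin p) ℝ) (hV : V = (A * Aᵀ)⁻¹)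
    (σ : ℝ) (hσ : 0 < σ) (g : Fin p → ℝ)
    (T : (Fin N → ℝ) → ℝ)
    (hT : ∀ γ : Fin p → ℝ, MemLp T 2 (gaussianPi N (Aᵀ.mulVec γ) σ))
    (hunbiased : ∀ γ : Fin p → ℝ,
      ∫ y, T y ∂(gaussianPi N (Aᵀ.mulVec γ) σ) = g ⬝ᵥ γ)
    (u : (Fin N → ℝ) → ℝ) :
    ∀ (γ : Fin p → ℝ) (y' : Fin N → ℝ),
      u y' ^ 2 < σ ^ 2 * (g ⬝ᵥ V.mulVec g) →
      u y' ^ 2 < ProbabilityTheory.variance T (gaussianPi N (Aᵀ.mulVec γ) σ) := by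
  intro γ y' hu
  subst hV
  exact hu.trans_le (sq_mul_dotProduct_inv_mulVec_le_variance hA hσ.ne' (hT γ) hunbiased)

/-- If an unbiased estimator reports an uncertainty smaller than that of the
anchor model, then that uncertainty is smaller than the estimator's sampling
standard deviation. -/
theorem stmt11 (p N : ℕ) (hp : 0 < p) (hN : 0 < N)
    (A : Matrix (Fin p) (Fin N) ℝ) (hA : IsUnit (A * Aᵀ).det)
    (V : Matrix (Fin p) (Fin p) ℝ) (hV : V = (A * Aᵀ)⁻¹)
    (σ : ℝ) (hσ : 0 < σ) (g : Fin p → ℝ)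
    (T : (Fin N → ℝ) → ℝ)
    (hT : ∀ γ : Fin p → ℝ, MemLp T 2 (gaussianPi N (Aᵀ.mulVec γ) σ))
    (hunbiased : ∀ γ : Fin p → ℝ,
      ∫ y, T y ∂(gaussianPi N (Aᵀ.mulVec γ) σ) = g ⬝ᵥ γ)
    (u : (Fin N → ℝ) → ℝ) (hu : ∀ y, 0 ≤ u y) :
    ∀ (γ : Fin p → ℝ) (y' : Fin N → ℝ),
      u y' ^ 2 < σ ^ 2 * (g ⬝ᵥ V.mulVec g) →
      u y' ^ 2 < ProbabilityTheory.variance T (gaussianPi N (Aᵀ.mulVec γ) σ) :=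
  stmt11_general p N A hA V hV σ hσ g T hT hunbiased u
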